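/- Let k be a field, n ≥ 1, and let f be a nonzero homogeneous polynomial in k[X_1,…,X_n] of degree d with 2 ≤ d < l. Set I = ⟨X_1,…,X_n⟩^l + ⟨f⟩, A = k[X_1,…,X_n]/I, write x_i = X_i + I, and let J be the ideal of A generated by x_1,…,x_n. Then every k-algebra automorphism φ of A factors uniquely as φ = φ_M ∘ u, where M ∈ GL_n(k) satisfies F_M(f) = α·f for some α ∈ k^×, φ_M is the automorphism of A induced by F_M, and u is a k-algebra automorphism of A with u(x_i) − x_i ∈ J² for every i. -/

import Mathlib

/-!
An automorphism `φ` of `A = k[X] ⧸ I` preserves the nilradical `J`, which is the image of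
`(X₁, …, Xₙ)`; since `I ⊆ (X)²`, the classes `x_i` form a basis of `J / J²`, and `φ` acts on it
by a matrix `M`. Lift `φ (x_j)` to `g_j ≡ F_M (X_j)` modulo `(X)²`. Then `f (g) ∈ I` because
`f (x) = 0`, and `f (g) ≡ F_M f` modulo `(X)^(d + 1)`. As `I ≡ (f)` modulo `(X)^(d + 1)` and
`F_M f` is a form of degree `d`, `F_M f = α • f`, with `α ≠ 0` because `F_M` is invertible.
Hence `F_M` preserves `I` and induces `φ_M`, and `u = φ_M⁻¹ ∘ φ` acts trivially on `J / J²`.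
Conversely, any factorization `φ = φ_{M'} ∘ u'` forces `M'` to be the matrix of `φ` on `J / J²`,
and then `u' = φ_M⁻¹ ∘ φ`.
-/

namespace Ideal

variable {S : Type*} [CommRing S] {𝔞 : Ideal S}

lemma mul_sub_mul_mem_pow {a a' b b' : S} {r s : ℕ} (ha : a - a' ∈ 𝔞 ^ (r + 1))
    (ha' : a' ∈ 𝔞 ^ r) (hb : b - b' ∈ 𝔞 ^ (s + 1)) (hb' : b' ∈ 𝔞 ^ s) :
    a * b - a' * b' ∈ 𝔞 ^ (r + s + 1) := by
  have ha_mem : a ∈ 𝔞 ^ r := by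
    simpa using add_mem (pow_le_pow_right r.le_succ ha) ha'
  rw [show a * b - a' * b' = (a - a') * b' + a * (b - b') by ring]
  refine add_mem ?_ ?_
  · rw [show r + s + 1 = (r + 1) + s by omega, pow_add]
    exact mul_mem_mul ha hb'
  · rw [add_assoc, pow_add]
    exact mul_mem_mul ha_mem hb

lemma prod_sub_prod_mem_pow {ι : Type*} (t : Finset ι) (r : ι → ℕ) {a a' : ι → S}
    (ha : ∀ i ∈ t, a i - a' i ∈ 𝔞 ^ (r i + 1)) (ha' : ∀ i ∈ t, a' i ∈ 𝔞 ^ r i) :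
    ∏ i ∈ t, a i - ∏ i ∈ t, a' i ∈ 𝔞 ^ (∑ i ∈ t, r i + 1) := by
  classical
  induction t using Finset.induction_on with
  | empty => simp
  | insert j t hj ih =>
    simp only [Finset.prod_insert hj, Finset.sum_insert hj, Finset.forall_mem_insert] at ha ha' ⊢
    refine mul_sub_mul_mem_pow ha.1 ha'.1 (ih ha.2 ha'.2) ?_
    rw [← Finset.prod_pow_eq_pow_sum]
    exact prod_mem_prod ha'.2

lemma pow_sub_pow_mem_pow {a a' : S} {r : ℕ} (ha : a - a' ∈ 𝔞 ^ (r + 1)) (ha' : a' ∈ 𝔞 ^ r)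
    (e : ℕ) : a ^ e - a' ^ e ∈ 𝔞 ^ (r * e + 1) := by
  simpa [mul_comm] using prod_sub_prod_mem_pow (Finset.range e) (fun _ => r)
    (fun _ _ => ha) (fun _ _ => ha')

lemma Quotient.eq_trans_symm_of_apply_symm_mk {R A : Type*} [CommRing R] [CommRing A]
    [Algebra R A] {I : Ideal A} {φ u ψ : (A ⧸ I) ≃ₐ[R] (A ⧸ I)}
    (h : ∀ g, φ (u.symm (Ideal.Quotient.mk I g)) = ψ (Ideal.Quotient.mk I g)) :
    u = φ.trans ψ.symm := by
  refine AlgEquiv.ext fun a => ?_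
  obtain ⟨g, hg⟩ := Ideal.Quotient.mk_surjective (u a)
  rw [AlgEquiv.trans_apply, ← u.symm_apply_apply a, ← hg, h, AlgEquiv.symm_apply_apply,
    AlgEquiv.apply_symm_apply]

end Ideal

namespace MvPolynomial

section IdealOfVars

variable {R σ : Type*} [CommRing R]

lemma X_mem_idealOfVars (i : σ) : (X i : MvPolynomial σ R) ∈ idealOfVars σ R :=
  Ideal.subset_span ⟨i, rfl⟩

lemma mem_idealOfVars_iff {p : MvPolynomial σ R} :
    p ∈ idealOfVars σ R ↔ constantCoeff p = 0 := by
  rw [← pow_one (idealOfVars σ R), mem_pow_idealOfVars_iff']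
  simp [Finsupp.degree_eq_zero_iff, constantCoeff_eq]

lemma IsHomogeneous.mem_pow_idealOfVars {p : MvPolynomial σ R} {d : ℕ}
    (hp : p.IsHomogeneous d) : p ∈ idealOfVars σ R ^ d :=
  (mem_pow_idealOfVars_iff' d p).mpr fun _ hs => hp.coeff_eq_zero hs.ne

lemma IsHomogeneous.eq_zero_of_mem_pow_idealOfVars {p : MvPolynomial σ R} {d : ℕ}
    (hp : p.IsHomogeneous d) (h : p ∈ idealOfVars σ R ^ (d + 1)) : p = 0 := by
  ext s
  rw [coeff_zero]
  rcases lt_or_ge s.degree (d + 1) with hs | hs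
  · exact (mem_pow_idealOfVars_iff' _ p).mp h s hs
  · exact hp.coeff_eq_zero (by omega)

/-- With `p = q * f + z`, the difference `p - (constantCoeff q) • f` is a form of degree `d`
lying in `idealOfVars σ R ^ (d + 1)`, hence zero. -/
lemma IsHomogeneous.exists_eq_smul_of_mem_span_sup {p f : MvPolynomial σ R} {d : ℕ}
    (hp : p.IsHomogeneous d) (hf : f.IsHomogeneous d)
    (h : p ∈ Ideal.span {f} ⊔ idealOfVars σ R ^ (d + 1)) : ∃ c : R, p = c • f := by
  obtain ⟨_, hy, z, hz, rfl⟩ := Submodule.mem_sup.mp h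
  obtain ⟨q, rfl⟩ := Ideal.mem_span_singleton'.mp hy
  refine ⟨constantCoeff q, sub_eq_zero.mp <|
    IsHomogeneous.eq_zero_of_mem_pow_idealOfVars (d := d) ?_ ?_⟩
  · rw [smul_eq_C_mul]
    exact hp.sub (hf.C_mul _)
  · have hq : q - C (constantCoeff q) ∈ idealOfVars σ R := by
      simp [mem_idealOfVars_iff]
    have hqf : (q - C (constantCoeff q)) * f ∈ idealOfVars σ R ^ (d + 1) := by
      rw [pow_succ']
      exact Ideal.mul_mem_mul hq hf.mem_pow_idealOfVars
    convert add_mem hqf hz using 1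
    rw [smul_eq_C_mul]
    ring

lemma coeff_single_one_eq_zero_of_mem_sq {p : MvPolynomial σ R} (hp : p ∈ idealOfVars σ R ^ 2)
    (i : σ) : coeff (Finsupp.single i 1) p = 0 :=
  (mem_pow_idealOfVars_iff' 2 p).mp hp _ (by simp)

lemma sub_sum_coeff_single_one_mem_sq [Fintype σ] [DecidableEq σ] {p : MvPolynomial σ R}
    (hp : p ∈ idealOfVars σ R) :
    p - ∑ i, C (coeff (Finsupp.single i 1) p) * X i ∈ idealOfVars σ R ^ 2 := by
  refine (mem_pow_idealOfVars_iff' 2 _).mpr fun s hs => ?_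
  obtain hs0 | hs1 : s.degree = 0 ∨ s.degree = 1 := by omega
  · rw [Finsupp.degree_eq_zero_iff] at hs0
    subst hs0
    have h0 : coeff 0 p = 0 := by simpa [constantCoeff_eq] using mem_idealOfVars_iff.mp hp
    simp [h0, coeff_sum, coeff_C_mul, coeff_X]
  · obtain ⟨i, rfl⟩ : ∃ i, s = Finsupp.single i 1 :=
      (Finsupp.sum_eq_one_iff s).mp hs1
    simp [coeff_sum, coeff_C_mul, coeff_X, Finsupp.single_left_inj]

lemma idealOfVars_pow_sup_span_le_sq {f : MvPolynomial σ R} {d l : ℕ} (hf : f.IsHomogeneous d)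
    (hd : 2 ≤ d) (hl : 2 ≤ l) : idealOfVars σ R ^ l ⊔ Ideal.span {f} ≤ idealOfVars σ R ^ 2 :=
  sup_le (Ideal.pow_le_pow_right hl)
    ((Ideal.span_singleton_le_iff_mem _).mpr (Ideal.pow_le_pow_right hd hf.mem_pow_idealOfVars))

end IdealOfVars

lemma aeval_sub_aeval_mem_pow {R σ S : Type*} [CommRing R] [CommRing S]
    [Algebra R S] {𝔞 : Ideal S} {f : MvPolynomial σ R} {d : ℕ} (hf : f.IsHomogeneous d)
    {x y : σ → S} (hxy : ∀ i, x i - y i ∈ 𝔞 ^ 2) (hy : ∀ i, y i ∈ 𝔞) :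
    aeval x f - aeval y f ∈ 𝔞 ^ (d + 1) := by
  rw [f.as_sum, map_sum, map_sum, ← Finset.sum_sub_distrib]
  refine Ideal.sum_mem _ fun s hs => ?_
  rw [aeval_monomial, aeval_monomial, ← mul_sub]
  refine Ideal.mul_mem_left _ _ ?_
  have hd : ∑ i ∈ s.support, s i = d := by
    rw [← Finsupp.degree_apply, Finsupp.degree_eq_weight_one]
    exact hf (mem_support_iff.mp hs)
  have hpow : ∀ i, x i ^ s i - y i ^ s i ∈ 𝔞 ^ (s i + 1) := fun i => by
    simpa using Ideal.pow_sub_pow_mem_pow (r := 1) (hxy i) (by simpa using hy i) (s i)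
  simpa only [Finsupp.prod, hd] using Ideal.prod_sub_prod_mem_pow s.support s
    (fun i _ => hpow i) (fun i _ => Ideal.pow_mem_pow (hy i) _)

section LinearSubst

variable {R σ : Type*} [CommRing R] [Fintype σ]

/-- The paper's `F_M`. -/
noncomputable def linearSubst (M : Matrix σ σ R) : MvPolynomial σ R →ₐ[R] MvPolynomial σ R :=
  aeval fun j => ∑ i, C (M i j) * X i

@[simp]
lemma linearSubst_X (M : Matrix σ σ R) (j : σ) : linearSubst M (X j) = ∑ i, C (M i j) * X i :=
  aeval_X _ _

lemma linearSubst_comp (M N : Matrix σ σ R) :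
    (linearSubst M).comp (linearSubst N) = linearSubst (M * N) := by
  refine algHom_ext fun j => ?_
  simp only [AlgHom.comp_apply, linearSubst_X, map_sum, _root_.map_mul, algHom_C,
    algebraMap_eq, Finset.mul_sum, Matrix.mul_apply, Finset.sum_mul]
  rw [Finset.sum_comm]
  simp only [mul_comm, mul_left_comm]

lemma linearSubst_one [DecidableEq σ] : linearSubst (1 : Matrix σ σ R) = AlgHom.id R _ :=
  algHom_ext fun j => by simp [Matrix.one_apply, apply_ite C]

lemma linearSubst_X_mem_idealOfVars (M : Matrix σ σ R) (j : σ) :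
    linearSubst M (X j) ∈ idealOfVars σ R := by
  rw [linearSubst_X]
  exact Ideal.sum_mem _ fun i _ => Ideal.mul_mem_left _ _ (X_mem_idealOfVars i)

lemma IsHomogeneous.linearSubst {p : MvPolynomial σ R} {d : ℕ} (hp : p.IsHomogeneous d)
    (M : Matrix σ σ R) : (linearSubst M p).IsHomogeneous d := by
  have h := hp.aeval (fun j => ∑ i, C (M i j) * X i) fun j =>
    IsHomogeneous.sum _ _ _ fun i _ => isHomogeneous_C_mul_X (M i j) i
  rwa [one_mul] at h

variable [DecidableEq σ]

noncomputable def linearSubstEquiv (U : GL σ R) : MvPolynomial σ R ≃ₐ[R] MvPolynomial σ R :=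
  AlgEquiv.ofAlgHom (linearSubst U) (linearSubst ↑U⁻¹)
    (by rw [linearSubst_comp, U.mul_inv, linearSubst_one])
    (by rw [linearSubst_comp, U.inv_mul, linearSubst_one])

lemma linearSubstEquiv_apply (U : GL σ R) (p : MvPolynomial σ R) :
    linearSubstEquiv U p = linearSubst U p := rfl

lemma map_linearSubstEquiv_idealOfVars (U : GL σ R) :
    (idealOfVars σ R).map (linearSubstEquiv U) = idealOfVars σ R := by
  refine le_antisymm ?_ ?_
  · rw [Ideal.map_span, Ideal.span_le]
    rintro _ ⟨_, ⟨j, rfl⟩, rfl⟩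
    exact linearSubst_X_mem_idealOfVars _ j
  · rw [Ideal.span_le]
    rintro _ ⟨j, rfl⟩
    have h : linearSubstEquiv U (linearSubst ↑U⁻¹ (X j)) = X j := by
      rw [linearSubstEquiv_apply, ← AlgHom.comp_apply, linearSubst_comp, U.mul_inv,
        linearSubst_one, AlgHom.id_apply]
    exact h ▸ Ideal.mem_map_of_mem _ (linearSubst_X_mem_idealOfVars _ j)

lemma map_linearSubstEquiv_pow_sup_span (U : GL σ R) {f : MvPolynomial σ R} {α : Rˣ}
    (hU : linearSubst (U : Matrix σ σ R) f = (α : R) • f) (l : ℕ) :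
    (idealOfVars σ R ^ l ⊔ Ideal.span {f}).map (linearSubstEquiv U) =
      idealOfVars σ R ^ l ⊔ Ideal.span {f} := by
  rw [Ideal.map_sup, Ideal.map_pow, map_linearSubstEquiv_idealOfVars, Ideal.map_span,
    Set.image_singleton, linearSubstEquiv_apply, hU, smul_eq_C_mul,
    Ideal.span_singleton_mul_left_unit (α.isUnit.map C)]

end LinearSubst

section Quotient

variable {R σ : Type*} [CommRing R] {I : Ideal (MvPolynomial σ R)}

variable (I) in
noncomputable abbrev quotientIdealOfVars : Ideal (MvPolynomial σ R ⧸ I) :=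
  (idealOfVars σ R).map (Ideal.Quotient.mk I)

lemma quotientIdealOfVars_eq_span :
    quotientIdealOfVars I = Ideal.span (Set.range fun i => Ideal.Quotient.mk I (X i)) := by
  rw [quotientIdealOfVars, Ideal.map_span, ← Set.range_comp]
  rfl

lemma isNilpotent_mk_X {l : ℕ} (hl : idealOfVars σ R ^ l ≤ I) (i : σ) :
    IsNilpotent (Ideal.Quotient.mk I (X i)) := by
  refine ⟨l, ?_⟩
  rw [← map_pow, Ideal.Quotient.eq_zero_iff_mem]
  exact hl (Ideal.pow_mem_pow (X_mem_idealOfVars i) l)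

lemma mem_quotientIdealOfVars_of_isNilpotent [IsReduced R] (hIm : I ≤ idealOfVars σ R)
    {a : MvPolynomial σ R ⧸ I} (ha : IsNilpotent a) : a ∈ quotientIdealOfVars I := by
  obtain ⟨p, rfl⟩ := Ideal.Quotient.mk_surjective a
  obtain ⟨m, hm⟩ := ha
  rw [← map_pow, Ideal.Quotient.eq_zero_iff_mem] at hm
  have hpm := mem_idealOfVars_iff.mp (hIm hm)
  rw [map_pow] at hpm
  exact Ideal.mem_map_of_mem _ (mem_idealOfVars_iff.mpr (IsNilpotent.eq_zero ⟨m, hpm⟩))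

/-- The image of `idealOfVars σ R` is the nilradical of the quotient. -/
lemma map_quotientIdealOfVars_le [IsReduced R] (hIm : I ≤ idealOfVars σ R) {l : ℕ}
    (hl : idealOfVars σ R ^ l ≤ I) {F : Type*}
    [FunLike F (MvPolynomial σ R ⧸ I) (MvPolynomial σ R ⧸ I)]
    [RingHomClass F (MvPolynomial σ R ⧸ I) (MvPolynomial σ R ⧸ I)] (ψ : F) :
    (quotientIdealOfVars I).map ψ ≤ quotientIdealOfVars I := by
  rw [quotientIdealOfVars_eq_span, Ideal.map_span, Ideal.span_le]
  rintro _ ⟨_, ⟨i, rfl⟩, rfl⟩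
  rw [← quotientIdealOfVars_eq_span]
  exact mem_quotientIdealOfVars_of_isNilpotent hIm ((isNilpotent_mk_X hl i).map ψ)

lemma apply_mem_quotientIdealOfVars_sq [IsReduced R] (hIm : I ≤ idealOfVars σ R) {l : ℕ}
    (hl : idealOfVars σ R ^ l ≤ I) {F : Type*}
    [FunLike F (MvPolynomial σ R ⧸ I) (MvPolynomial σ R ⧸ I)]
    [RingHomClass F (MvPolynomial σ R ⧸ I) (MvPolynomial σ R ⧸ I)] (ψ : F)
    {a : MvPolynomial σ R ⧸ I} (ha : a ∈ quotientIdealOfVars I ^ 2) :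
    ψ a ∈ quotientIdealOfVars I ^ 2 :=
  Ideal.pow_right_mono (map_quotientIdealOfVars_le hIm hl ψ) 2
    (Ideal.map_pow ψ _ 2 ▸ Ideal.mem_map_of_mem ψ ha)

lemma mk_C_mul (c : R) (p : MvPolynomial σ R) :
    Ideal.Quotient.mk I (C c * p) = c • Ideal.Quotient.mk I p := by
  rw [← smul_eq_C_mul, ← Ideal.Quotient.mkₐ_eq_mk R, map_smul]

lemma mk_linearSubst_X [Fintype σ] (M : Matrix σ σ R) (j : σ) :
    Ideal.Quotient.mk I (linearSubst M (X j)) = ∑ i, M i j • Ideal.Quotient.mk I (X i) := by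
  simp only [linearSubst_X, map_sum, mk_C_mul]

noncomputable def quotientCoeffX (hI : I ≤ idealOfVars σ R ^ 2) (i : σ) :
    (MvPolynomial σ R ⧸ I) →ₗ[R] R :=
  (I.restrictScalars R).liftQ (lcoeff R (Finsupp.single i 1))
      (fun _ hp => coeff_single_one_eq_zero_of_mem_sq (hI hp) i) ∘ₗ
    (Submodule.Quotient.restrictScalarsEquiv R I).symm.toLinearMap

variable (hI : I ≤ idealOfVars σ R ^ 2)

@[simp]
lemma quotientCoeffX_mk (i : σ) (p : MvPolynomial σ R) :
    quotientCoeffX hI i (Ideal.Quotient.mk I p) = coeff (Finsupp.single i 1) p :=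
  rfl

lemma quotientCoeffX_eq_zero_of_mem_sq {a : MvPolynomial σ R ⧸ I}
    (ha : a ∈ quotientIdealOfVars I ^ 2) (i : σ) : quotientCoeffX hI i a = 0 := by
  rw [← Ideal.map_pow, Ideal.mem_map_iff_of_surjective _ Ideal.Quotient.mk_surjective] at ha
  obtain ⟨p, hp, rfl⟩ := ha
  exact coeff_single_one_eq_zero_of_mem_sq hp i

variable [Fintype σ] [DecidableEq σ]

lemma quotientCoeffX_mk_linearSubst_X (M : Matrix σ σ R) (i j : σ) :
    quotientCoeffX hI i (Ideal.Quotient.mk I (linearSubst M (X j))) = M i j := by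
  rw [quotientCoeffX_mk, linearSubst_X]
  simp [coeff_sum, coeff_C_mul, coeff_X, Finsupp.single_left_inj]

lemma sub_sum_quotientCoeffX_smul_mem_sq {a : MvPolynomial σ R ⧸ I}
    (ha : a ∈ quotientIdealOfVars I) :
    a - ∑ i, quotientCoeffX hI i a • Ideal.Quotient.mk I (X i) ∈ quotientIdealOfVars I ^ 2 := by
  rw [Ideal.mem_map_iff_of_surjective _ Ideal.Quotient.mk_surjective] at ha
  obtain ⟨p, hp, rfl⟩ := ha
  rw [← Ideal.map_pow]
  convert Ideal.mem_map_of_mem _ (sub_sum_coeff_single_one_mem_sq hp) using 1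
  simp only [map_sub, map_sum, mk_C_mul, quotientCoeffX_mk]

variable [IsReduced R] {l : ℕ}

lemma quotientCoeffX_apply_eq_sum (hl : idealOfVars σ R ^ l ≤ I) {F : Type*}
    [FunLike F (MvPolynomial σ R ⧸ I) (MvPolynomial σ R ⧸ I)]
    [AlgHomClass F R (MvPolynomial σ R ⧸ I) (MvPolynomial σ R ⧸ I)] (ψ : F)
    {a : MvPolynomial σ R ⧸ I} (ha : a ∈ quotientIdealOfVars I) (i : σ) :
    quotientCoeffX hI i (ψ a) =
      ∑ m, quotientCoeffX hI m a * quotientCoeffX hI i (ψ (Ideal.Quotient.mk I (X m))) := by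
  have h := quotientCoeffX_eq_zero_of_mem_sq hI (apply_mem_quotientIdealOfVars_sq
    (hI.trans (Ideal.pow_le_self two_ne_zero)) hl ψ (sub_sum_quotientCoeffX_smul_mem_sq hI ha)) i
  simpa [sub_eq_zero] using h

/-- The matrix of the map induced on `J / J ^ 2` (with `J = quotientIdealOfVars I`) in the basis
of the classes of the `X i`: the paper's `Φ_A`. -/
noncomputable def linearPart (hl : idealOfVars σ R ^ l ≤ I) :
    ((MvPolynomial σ R ⧸ I) ≃ₐ[R] (MvPolynomial σ R ⧸ I)) →* Matrix σ σ R where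
  toFun ψ := Matrix.of fun i j => quotientCoeffX hI i (ψ (Ideal.Quotient.mk I (X j)))
  map_one' := by
    ext i j
    simpa [linearSubst_one] using quotientCoeffX_mk_linearSubst_X hI 1 i j
  map_mul' ψ χ := by
    ext i j
    have hχ : χ (Ideal.Quotient.mk I (X j)) ∈ quotientIdealOfVars I :=
      map_quotientIdealOfVars_le (hI.trans (Ideal.pow_le_self two_ne_zero)) hl χ
        (Ideal.mem_map_of_mem _ (Ideal.mem_map_of_mem _ (X_mem_idealOfVars j)))
    simp [quotientCoeffX_apply_eq_sum hI hl ψ hχ, Matrix.mul_apply, mul_comm]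

lemma sub_mk_linearSubst_linearPart_mem_sq (hl : idealOfVars σ R ^ l ≤ I)
    (ψ : (MvPolynomial σ R ⧸ I) ≃ₐ[R] (MvPolynomial σ R ⧸ I)) (j : σ) :
    ψ (Ideal.Quotient.mk I (X j)) - Ideal.Quotient.mk I (linearSubst (linearPart hI hl ψ) (X j))
      ∈ quotientIdealOfVars I ^ 2 := by
  rw [mk_linearSubst_X]
  exact sub_sum_quotientCoeffX_smul_mem_sq hI (map_quotientIdealOfVars_le
    (hI.trans (Ideal.pow_le_self two_ne_zero)) hl ψ
    (Ideal.mem_map_of_mem _ (Ideal.mem_map_of_mem _ (X_mem_idealOfVars j))))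

lemma linearPart_eq_of_sub_mem_sq (hl : idealOfVars σ R ^ l ≤ I)
    (ψ : (MvPolynomial σ R ⧸ I) ≃ₐ[R] (MvPolynomial σ R ⧸ I)) (M : Matrix σ σ R)
    (h : ∀ j, ψ (Ideal.Quotient.mk I (X j)) - Ideal.Quotient.mk I (linearSubst M (X j)) ∈
      quotientIdealOfVars I ^ 2) :
    linearPart hI hl ψ = M := by
  ext i j
  have h0 := quotientCoeffX_eq_zero_of_mem_sq hI (h j) i
  rwa [map_sub, quotientCoeffX_mk_linearSubst_X, sub_eq_zero] at h0

/-- Lift `ψ (X j)` to `g j ≡ linearSubst M (X j)` modulo `idealOfVars σ R ^ 2`: then `aeval g p`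
lies in `I`, and differs from `linearSubst M p` only in degrees above `d`. -/
lemma linearSubst_linearPart_mem_sup (hl : idealOfVars σ R ^ l ≤ I)
    (ψ : (MvPolynomial σ R ⧸ I) ≃ₐ[R] (MvPolynomial σ R ⧸ I)) {p : MvPolynomial σ R} {d : ℕ}
    (hp : p.IsHomogeneous d) (hpI : p ∈ I) :
    linearSubst (linearPart hI hl ψ) p ∈ I ⊔ idealOfVars σ R ^ (d + 1) := by
  set M := linearPart hI hl ψ
  have hlift := fun j => (Ideal.mem_map_iff_of_surjective _ Ideal.Quotient.mk_surjective).mp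
    (Ideal.map_pow (Ideal.Quotient.mk I) _ 2 ▸ sub_mk_linearSubst_linearPart_mem_sq hI hl ψ j)
  choose r hr hmk using hlift
  set g := fun j => ∑ i, C (M i j) * X i + r j
  have hgI : aeval g p ∈ I := by
    rw [← Ideal.Quotient.eq_zero_iff_mem, ← Ideal.Quotient.mkₐ_eq_mk R, comp_aeval_apply]
    have hg : (fun j => Ideal.Quotient.mkₐ R I (g j)) =
        fun j => ψ (Ideal.Quotient.mk I (X j)) := by
      funext j
      rw [Ideal.Quotient.mkₐ_eq_mk, map_add, hmk, ← linearSubst_X, add_sub_cancel]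
    have hψ : ψ (Ideal.Quotient.mk I p) = aeval (fun j => ψ (Ideal.Quotient.mk I (X j))) p := by
      rw [← Ideal.Quotient.mkₐ_eq_mk R, mkₐ_eq_aeval]
      simpa using comp_aeval_apply _ ψ.toAlgHom p
    rw [hg, ← hψ, Ideal.Quotient.eq_zero_iff_mem.mpr hpI, map_zero]
  have hdiff : aeval g p - linearSubst M p ∈ idealOfVars σ R ^ (d + 1) :=
    aeval_sub_aeval_mem_pow hp (fun j => by simpa [g] using hr j)
      (fun j => by simpa using linearSubst_X_mem_idealOfVars M j)
  rw [← sub_sub_cancel (aeval g p) (linearSubst M p)]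
  exact sub_mem (Ideal.mem_sup_left hgI) (Ideal.mem_sup_right hdiff)

lemma linearPart_eq_of_apply_symm_mk_X (hl : idealOfVars σ R ^ l ≤ I)
    {φ u : (MvPolynomial σ R ⧸ I) ≃ₐ[R] (MvPolynomial σ R ⧸ I)} {M : Matrix σ σ R}
    (hu : ∀ i, u (Ideal.Quotient.mk I (X i)) - Ideal.Quotient.mk I (X i) ∈
      quotientIdealOfVars I ^ 2)
    (hφ : ∀ j, φ (u.symm (Ideal.Quotient.mk I (X j))) =
      Ideal.Quotient.mk I (linearSubst M (X j))) :
    linearPart hI hl φ = M :=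
  linearPart_eq_of_sub_mem_sq hI hl φ M fun j => by
    simpa [hφ] using apply_mem_quotientIdealOfVars_sq (hI.trans (Ideal.pow_le_self two_ne_zero))
      hl (u.symm.trans φ) (hu j)

lemma trans_symm_apply_mk_X_sub_mem_sq (hl : idealOfVars σ R ^ l ≤ I)
    {φ ψ : (MvPolynomial σ R ⧸ I) ≃ₐ[R] (MvPolynomial σ R ⧸ I)}
    (hψ : ∀ j, ψ (Ideal.Quotient.mk I (X j)) =
      Ideal.Quotient.mk I (linearSubst (linearPart hI hl φ) (X j))) (i : σ) :
    (φ.trans ψ.symm) (Ideal.Quotient.mk I (X i)) - Ideal.Quotient.mk I (X i) ∈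
      quotientIdealOfVars I ^ 2 := by
  have h := apply_mem_quotientIdealOfVars_sq (hI.trans (Ideal.pow_le_self two_ne_zero)) hl ψ.symm
    (sub_mk_linearSubst_linearPart_mem_sq hI hl φ i)
  rwa [map_sub, ψ.symm_apply_eq.mpr (hψ i).symm] at h

end Quotient

lemma exists_linearSubst_linearPart_eq_smul {σ k : Type*} [Fintype σ] [DecidableEq σ] [Field k]
    {I : Ideal (MvPolynomial σ k)} (hI : I ≤ idealOfVars σ k ^ 2) {l : ℕ}
    (hl : idealOfVars σ k ^ l ≤ I)
    {f : MvPolynomial σ k} {d : ℕ} (hf0 : f ≠ 0) (hf : f.IsHomogeneous d) (hfI : f ∈ I)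
    (hIf : I ≤ Ideal.span {f} ⊔ idealOfVars σ k ^ (d + 1))
    (ψ : (MvPolynomial σ k ⧸ I) ≃ₐ[k] (MvPolynomial σ k ⧸ I)) :
    ∃ α : kˣ, linearSubst (linearPart hI hl ψ) f = (α : k) • f := by
  have hmem := sup_le hIf le_sup_right (linearSubst_linearPart_mem_sup hI hl ψ hf hfI)
  obtain ⟨c, hc⟩ := (hf.linearSubst _).exists_eq_smul_of_mem_span_sup hf hmem
  have hc0 : c ≠ 0 := by
    rintro rfl
    rw [zero_smul, ← MonoidHom.coe_toHomUnits, ← linearSubstEquiv_apply,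
      map_eq_zero_iff _ (linearSubstEquiv _).injective] at hc
    exact hf0 hc
  exact ⟨Units.mk0 c hc0, hc⟩

end MvPolynomial

open MvPolynomial

theorem stmt_9_general (k : Type*) [Field k] (n l d : ℕ)
    (f : MvPolynomial (Fin n) k) (hf0 : f ≠ 0) (hf : f.IsHomogeneous d)
    (hd2 : 2 ≤ d) (hdl : d < l)
    (I : Ideal (MvPolynomial (Fin n) k))
    (hI : I = (Ideal.span (Set.range (X : Fin n → MvPolynomial (Fin n) k))) ^ l
            + Ideal.span {f})
    (J : Ideal (MvPolynomial (Fin n) k ⧸ I))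
    (hJ : J = Ideal.span (Set.range fun i => Ideal.Quotient.mk I (X i))) :
    ∀ φ : (MvPolynomial (Fin n) k ⧸ I) ≃ₐ[k] (MvPolynomial (Fin n) k ⧸ I),
      ∃! Mu : GL (Fin n) k × ((MvPolynomial (Fin n) k ⧸ I) ≃ₐ[k] (MvPolynomial (Fin n) k ⧸ I)),
        (∃ α : kˣ,
            aeval (fun j => ∑ i, C ((Mu.1 : Matrix (Fin n) (Fin n) k) i j) * X i) f
              = (α : k) • f) ∧
        (∀ i : Fin n,
            Mu.2 (Ideal.Quotient.mk I (X i)) - Ideal.Quotient.mk I (X i) ∈ J ^ 2) ∧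
        (∀ g : MvPolynomial (Fin n) k,
            φ (Mu.2.symm (Ideal.Quotient.mk I g)) =
              Ideal.Quotient.mk I
                (aeval (fun j => ∑ i, C ((Mu.1 : Matrix (Fin n) (Fin n) k) i j) * X i) g)) := by
  intro φ
  rw [← quotientIdealOfVars_eq_span] at hJ
  subst hJ
  replace hI : I = idealOfVars (Fin n) k ^ l ⊔ Ideal.span {f} := hI
  have hl : idealOfVars (Fin n) k ^ l ≤ I := hI ▸ le_sup_left
  have hI2 : I ≤ idealOfVars (Fin n) k ^ 2 := hI ▸ idealOfVars_pow_sup_span_le_sq hf hd2 (by omega)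
  obtain ⟨α, hα⟩ := exists_linearSubst_linearPart_eq_smul hI2 hl hf0 hf
    (hI ▸ Ideal.mem_sup_right (Ideal.mem_span_singleton_self f))
    (hI ▸ sup_le (le_sup_of_le_right (Ideal.pow_le_pow_right hdl)) le_sup_left) φ
  obtain ⟨M, hM⟩ : ∃ M : GL (Fin n) k, linearPart hI2 hl φ = M :=
    ⟨_, (MonoidHom.coe_toHomUnits _ _).symm⟩
  rw [hM] at hα
  set φM := Ideal.quotientEquivAlg I I (linearSubstEquiv M)
    (by rw [hI]; exact (map_linearSubstEquiv_pow_sup_span M hα l).symm)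
  have hφM (g) : φM (Ideal.Quotient.mk I g) = Ideal.Quotient.mk I (linearSubst M g) :=
    Ideal.quotientEquivAlg_mk _ _ _ _
  refine ⟨(M, φ.trans φM.symm), ⟨⟨α, hα⟩, trans_symm_apply_mk_X_sub_mem_sq hI2 hl
    fun j => hM ▸ hφM (X j), fun g => (φ.apply_symm_apply _).trans (hφM g)⟩, ?_⟩
  rintro ⟨M', u'⟩ ⟨-, hu', hφ⟩
  replace hφ (g) : φ (u'.symm (Ideal.Quotient.mk I g)) = Ideal.Quotient.mk I (linearSubst M' g) :=
    hφ g
  obtain rfl : M' = M :=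
    Units.ext (hM ▸ linearPart_eq_of_apply_symm_mk_X hI2 hl hu' fun j => hφ (X j)).symm
  exact Prod.ext rfl (Ideal.Quotient.eq_trans_symm_of_apply_symm_mk fun g =>
    (hφ g).trans (hφM g).symm)

/-- paper's Proposition 5.12: `Aut_k(A) ≅ Sim(f) ⋉ Ker(Φ_A)`. Let `f` be a
nonzero homogeneous polynomial of degree `d` in `k[X_1,…,X_n]` with `2 ≤ d < l`, set
`I = ⟨X_1,…,X_n⟩^l + ⟨f⟩`, `A = k[X_1,…,X_n]/I`, `x_i = X_i + I`, and let `J` be the ideal of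
`A` generated by the `x_i`.  Then every `k`-algebra automorphism `φ` of `A` factors uniquely
as `φ = φ_M ∘ u`, where `M ∈ GL_n(k)` satisfies `F_M f = α • f` for some `α ∈ k^×`, `φ_M` is
induced by `F_M`, and `u` is an automorphism with `u(x_i) - x_i ∈ J²` for all `i`. -/
theorem stmt_9 (k : Type*) [Field k] (n l d : ℕ) (hn : 1 ≤ n)
    (f : MvPolynomial (Fin n) k) (hf0 : f ≠ 0) (hf : f.IsHomogeneous d)
    (hd2 : 2 ≤ d) (hdl : d < l)
    (I : Ideal (MvPolynomial (Fin n) k))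
    (hI : I = (Ideal.span (Set.range (X : Fin n → MvPolynomial (Fin n) k))) ^ l
            + Ideal.span {f})
    (J : Ideal (MvPolynomial (Fin n) k ⧸ I))
    (hJ : J = Ideal.span (Set.range fun i => Ideal.Quotient.mk I (X i))) :
    ∀ φ : (MvPolynomial (Fin n) k ⧸ I) ≃ₐ[k] (MvPolynomial (Fin n) k ⧸ I),
      ∃! Mu : GL (Fin n) k × ((MvPolynomial (Fin n) k ⧸ I) ≃ₐ[k] (MvPolynomial (Fin n) k ⧸ I)),
        (∃ α : kˣ,
            aeval (fun j => ∑ i, C ((Mu.1 : Matrix (Fin n) (Fin n) k) i j) * X i) f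
              = (α : k) • f) ∧
        (∀ i : Fin n,
            Mu.2 (Ideal.Quotient.mk I (X i)) - Ideal.Quotient.mk I (X i) ∈ J ^ 2) ∧
        (∀ g : MvPolynomial (Fin n) k,
            φ (Mu.2.symm (Ideal.Quotient.mk I g)) =
              Ideal.Quotient.mk I
                (aeval (fun j => ∑ i, C ((Mu.1 : Matrix (Fin n) (Fin n) k) i j) * X i) g)) :=
  stmt_9_general k n l d f hf0 hf hd2 hdl I hI J hJ
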